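/- Quantitative Riemann–Lebesgue lemma, case 1 < p ≤ 2 (Remark 3 (i)): Let 1 < p ≤ 2 with conjugate exponent p', and let f ∈ L^p_A(ℝ₊) on the Jacobi hypergroup. Then there exists a positive constant c such that for every δ > 0, (∫_{1/δ}^∞ |𝓕(f)(x)|^{p'} dx/|c(x)|²)^{1/p'} ≤ c ω_{A,p}(f)(δ). -/

import Mathlib

open MeasureTheory Set Filter

/-- The `L^p` norm on `(0,∞)` with respect to the weighted measure `w(x) dx`. -/
noncomputable def wLpNorm (w : ℝ → ℝ) (p : ℝ) (f : ℝ → ℂ) : ℝ :=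
  (∫ x in Set.Ioi (0 : ℝ), ‖f x‖ ^ p * w x) ^ (1 / p)

/-- Membership in `L^p((0,∞), w(x) dx)`. -/
def MemW (w : ℝ → ℝ) (p : ℝ) (f : ℝ → ℂ) : Prop :=
  AEMeasurable f (volume.restrict (Set.Ioi (0 : ℝ))) ∧
    IntegrableOn (fun x => ‖f x‖ ^ p * w x) (Set.Ioi (0 : ℝ))

/-- The Jacobi hypergroup setting: the Chébli–Trimèche hypergroup `(ℝ₊, ∗(A))` with
`A(x) = 2^(2ρ) (sinh x)^(2α+1) (cosh x)^(2β+1)`, `α ≥ β ≥ -1/2`, `α ≠ -1/2`,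
`ρ = α + β + 1`.  Its characters are the Jacobi functions `φ_λ`, satisfying
`|1 - φ_λ(t)| ≥ c₀ min{1, (λt)²}`.  The density `cden = |c(λ)|⁻²` is even, continuous
and comparable to `|λ|^(2α+1)` for `|λ| > k` and to `|λ|²` for `|λ| ≤ k`.  The
generalized Fourier transform `FT` is given on `L¹_A` by
`𝓕(f)(λ) = ∫₀^∞ f(x) φ_λ(x) A(x) dx`; it satisfies `‖𝓕 f‖_∞ ≤ ‖f‖_{A,1}`, the
Hausdorff–Young inequality, the Hardy–Littlewood inequality of Lemma 1 and the
translation identity `𝓕(τ_δ f)(λ) = φ_λ(δ) 𝓕(f)(λ)`, where the generalized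
translations `τ_δ` are `L^p_A`-contractions. -/
structure JacobiHypergroup where
  α : ℝ
  β : ℝ
  ρ : ℝ
  hβα : β ≤ α
  hβ : -(1/2) ≤ β
  hα : α ≠ -(1/2)
  hρ : ρ = α + β + 1
  /-- the weight function `A` of the Jacobi hypergroup -/
  A : ℝ → ℝ
  hA : ∀ x : ℝ, 0 ≤ x →
    A x = (2 : ℝ) ^ (2 * ρ) * Real.sinh x ^ (2 * α + 1) * Real.cosh x ^ (2 * β + 1)
  /-- the Jacobi functions `φ_λ`, the characters of the hypergroup -/
  φ : ℝ → ℝ → ℂ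
  c₀ : ℝ
  hc₀ : 0 < c₀
  hφ_lower : ∀ lam t : ℝ, 0 < t →
    c₀ * min 1 ((lam * t) ^ 2) ≤ ‖1 - φ lam t‖
  /-- the density `|c(λ)|⁻²` of the Plancherel measure -/
  cden : ℝ → ℝ
  hcden_cont : Continuous cden
  hcden_even : ∀ x : ℝ, cden (-x) = cden x
  k : ℝ
  k₁ : ℝ
  k₂ : ℝ
  hk : 0 < k
  hk₁ : 0 < k₁
  hk₂ : 0 < k₂
  hcden_hi : ∀ x : ℝ, k < |x| →
    k₁ * |x| ^ (2 * α + 1) ≤ cden x ∧ cden x ≤ k₂ * |x| ^ (2 * α + 1)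
  hcden_lo : ∀ x : ℝ, |x| ≤ k →
    k₁ * |x| ^ (2 : ℝ) ≤ cden x ∧ cden x ≤ k₂ * |x| ^ (2 : ℝ)
  /-- the generalized Fourier transform -/
  FT : (ℝ → ℂ) → ℝ → ℂ
  hFT_def : ∀ f : ℝ → ℂ, MemW A 1 f → ∀ lam : ℝ,
    FT f lam = ∫ x in Set.Ioi (0 : ℝ), f x * φ lam x * (A x : ℂ)
  hFT_meas : ∀ f : ℝ → ℂ, Measurable (FT f)
  hFT_sub : ∀ f g : ℝ → ℂ, ∀ lam : ℝ,
    FT (fun y => f y - g y) lam = FT f lam - FT g lam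
  /-- `‖𝓕 f‖_∞ ≤ ‖f‖_{A,1}` -/
  hFT_sup : ∀ f : ℝ → ℂ, MemW A 1 f → ∀ lam : ℝ,
    ‖FT f lam‖ ≤ wLpNorm A 1 f
  /-- the Hausdorff–Young inequality `‖𝓕 f‖_{c,p'} ≤ C ‖f‖_{A,p}` -/
  hHY : ∀ p p' : ℝ, 1 < p → p ≤ 2 → 1 / p + 1 / p' = 1 →
    ∃ C > (0 : ℝ), ∀ f : ℝ → ℂ, MemW A p f →
      (∫⁻ lam in Set.Ioi (0 : ℝ),
          ENNReal.ofReal (‖FT f lam‖ ^ p' * cden lam)) ^ (1 / p')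
        ≤ ENNReal.ofReal (C * wLpNorm A p f)
  /-- the Hardy–Littlewood inequality of Lemma 1 (with the piecewise weight
  `g(t) = t³` for `t ≤ k`, `g(t) = t^(2(α+1))` for `t > k`) -/
  hHL : ∀ p : ℝ, 1 < p → p ≤ 2 →
    ∃ C > (0 : ℝ), ∀ f : ℝ → ℂ, MemW A p f →
      ∫⁻ x in Set.Ioi (0 : ℝ),
          ENNReal.ofReal ((if x ≤ k then x ^ (3 : ℝ) else x ^ (2 * (α + 1))) ^ (p - 2) *
            ‖FT f x‖ ^ p * cden x)
        ≤ ENNReal.ofReal (C * wLpNorm A p f ^ p)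
  /-- the generalized translation operators -/
  τ : ℝ → (ℝ → ℂ) → ℝ → ℂ
  hτ_contract : ∀ p : ℝ, 1 ≤ p → ∀ (δ : ℝ) (f : ℝ → ℂ), MemW A p f →
    MemW A p (τ δ f) ∧ wLpNorm A p (τ δ f) ≤ wLpNorm A p f
  hτ_diff : ∀ p : ℝ, 1 ≤ p → ∀ (δ : ℝ) (f : ℝ → ℂ), MemW A p f →
    MemW A p (fun y => τ δ f y - f y)
  /-- the translation identity `𝓕(τ_δ f)(λ) = φ_λ(δ) 𝓕(f)(λ)` -/
  hτ_FT : ∀ p : ℝ, 1 ≤ p → p ≤ 2 → ∀ (δ : ℝ) (f : ℝ → ℂ), MemW A p f →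
    ∀ᵐ lam ∂(volume.restrict (Set.Ioi (0 : ℝ))),
      FT (τ δ f) lam = φ lam δ * FT f lam

/-- The modulus of continuity of first order, `ω_{A,p}(f)(δ) = ‖τ_δ f - f‖_{A,p}`. -/
noncomputable def JacobiHypergroup.omega (S : JacobiHypergroup) (p : ℝ)
    (f : ℝ → ℂ) (δ : ℝ) : ℝ :=
  wLpNorm S.A p (fun y => S.τ δ f y - f y)

/-! For `λ > 1/δ` the character bound gives `|1 - φ_λ(δ)| ≥ c₀`, so by the translation identity
`c₀ |𝓕 f(λ)| ≤ |𝓕(τ_δ f - f)(λ)|` there. Integrating over `(1/δ, ∞)`, enlarging the domain to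
`(0, ∞)` and applying Hausdorff–Young to `τ_δ f - f` bounds the tail of `𝓕 f` by
`C/c₀ · ‖τ_δ f - f‖_{A,p}`. -/

lemma lintegral_ofReal_rpow_mul_rpow_le_of_ae_mul_le {α : Type*} [MeasurableSpace α]
    {μ : Measure α} {u v w : α → ℝ} {a q : ℝ} (ha : 0 < a) (hq : 0 < q)
    (hu : ∀ x, 0 ≤ u x) (hw : ∀ x, 0 ≤ w x) (huv : ∀ᵐ x ∂μ, a * u x ≤ v x) :
    (∫⁻ x, ENNReal.ofReal (u x ^ q * w x) ∂μ) ^ (1 / q) ≤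
      ENNReal.ofReal a⁻¹ * (∫⁻ x, ENNReal.ofReal (v x ^ q * w x) ∂μ) ^ (1 / q) := by
  have hpointwise : ∀ᵐ x ∂μ, ENNReal.ofReal (u x ^ q * w x) ≤
      ENNReal.ofReal a⁻¹ ^ q * ENNReal.ofReal (v x ^ q * w x) := by
    filter_upwards [huv] with x hx
    have hu_le : u x ≤ a⁻¹ * v x := by rw [inv_mul_eq_div, le_div_iff₀' ha]; exact hx
    rw [ENNReal.ofReal_rpow_of_nonneg (by positivity) hq.le, ← ENNReal.ofReal_mul (by positivity),
      ← mul_assoc, ← Real.mul_rpow (by positivity) ((mul_nonneg ha.le (hu x)).trans hx)]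
    gcongr
    exacts [hw x, hu x]
  calc (∫⁻ x, ENNReal.ofReal (u x ^ q * w x) ∂μ) ^ (1 / q)
      ≤ (ENNReal.ofReal a⁻¹ ^ q * ∫⁻ x, ENNReal.ofReal (v x ^ q * w x) ∂μ) ^ (1 / q) := by
        rw [← lintegral_const_mul' _ _ (ENNReal.rpow_ne_top_of_nonneg hq.le ENNReal.ofReal_ne_top)]
        gcongr ?_ ^ _
        exact lintegral_mono_ae hpointwise
    _ = ENNReal.ofReal a⁻¹ * (∫⁻ x, ENNReal.ofReal (v x ^ q * w x) ∂μ) ^ (1 / q) := by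
        rw [ENNReal.mul_rpow_of_nonneg _ _ (by positivity), one_div,
          ENNReal.rpow_rpow_inv hq.ne']

namespace JacobiHypergroup

variable (S : JacobiHypergroup)

lemma cden_nonneg (x : ℝ) : 0 ≤ S.cden x := by
  rcases le_or_gt |x| S.k with hx | hx
  · exact (mul_nonneg S.hk₁.le (Real.rpow_nonneg (abs_nonneg x) _)).trans (S.hcden_lo x hx).1
  · exact (mul_nonneg S.hk₁.le (Real.rpow_nonneg (abs_nonneg x) _)).trans (S.hcden_hi x hx).1

lemma c₀_le_norm_one_sub_φ {lam t : ℝ} (ht : 0 < t) (h : 1 ≤ lam * t) :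
    S.c₀ ≤ ‖1 - S.φ lam t‖ := by
  have hmin : min 1 ((lam * t) ^ 2) = 1 := min_eq_left (by nlinarith)
  simpa [hmin] using S.hφ_lower lam t ht

lemma c₀_mul_norm_FT_le_norm_FT_sub {p δ : ℝ} (hp : 1 ≤ p) (hp2 : p ≤ 2) (hδ : 0 < δ)
    {f : ℝ → ℂ} (hf : MemW S.A p f) :
    ∀ᵐ lam ∂(volume.restrict (Ioi (1 / δ))),
      S.c₀ * ‖S.FT f lam‖ ≤ ‖S.FT (fun y => S.τ δ f y - f y) lam‖ := by
  have hsub : Ioi (1 / δ) ⊆ Ioi (0 : ℝ) := Ioi_subset_Ioi (by positivity)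
  filter_upwards [ae_restrict_of_ae_restrict_of_subset hsub (S.hτ_FT p hp hp2 δ f hf),
    ae_restrict_mem measurableSet_Ioi] with lam hτ hlam
  have hlamδ : 1 ≤ lam * δ := by
    rw [mem_Ioi, div_lt_iff₀ hδ] at hlam
    exact hlam.le
  rw [S.hFT_sub, hτ, ← sub_one_mul, norm_mul, norm_sub_rev]
  exact mul_le_mul_of_nonneg_right (S.c₀_le_norm_one_sub_φ hδ hlamδ) (norm_nonneg _)

end JacobiHypergroup

/-- **Quantitative Riemann–Lebesgue lemma, case 1 < p ≤ 2** (Remark 3 (i)): for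
`1 < p ≤ 2` with conjugate exponent `p'` and `f ∈ L^p_A(ℝ₊)` on the Jacobi
hypergroup, there exists `c > 0` such that for every `δ > 0`,
`(∫_{1/δ}^∞ |𝓕(f)(x)|^(p') dx/|c(x)|²)^(1/p') ≤ c ω_{A,p}(f)(δ)`. -/
theorem riemann_lebesgue_one_lt_p (S : JacobiHypergroup) (p p' : ℝ) (hp : 1 < p)
    (hp2 : p ≤ 2) (hpp' : 1 / p + 1 / p' = 1) (f : ℝ → ℂ) (hf : MemW S.A p f) :
    ∃ c > (0 : ℝ), ∀ δ > (0 : ℝ),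
      (∫⁻ x in Set.Ioi (1 / δ),
          ENNReal.ofReal (‖S.FT f x‖ ^ p' * S.cden x)) ^ (1 / p')
        ≤ ENNReal.ofReal (c * S.omega p f δ) := by
  obtain ⟨C, hC, hHY⟩ := S.hHY p p' hp hp2 hpp'
  have hp' : 0 < p' := one_div_pos.mp <| by
    have : 1 / p < 1 := (div_lt_one (by linarith)).mpr hp
    linarith
  refine ⟨S.c₀⁻¹ * C, mul_pos (inv_pos.mpr S.hc₀) hC, fun δ hδ => ?_⟩
  calc (∫⁻ x in Ioi (1 / δ), ENNReal.ofReal (‖S.FT f x‖ ^ p' * S.cden x)) ^ (1 / p')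
      ≤ ENNReal.ofReal S.c₀⁻¹ * (∫⁻ x in Ioi (1 / δ),
          ENNReal.ofReal (‖S.FT (fun y => S.τ δ f y - f y) x‖ ^ p' * S.cden x)) ^ (1 / p') :=
        lintegral_ofReal_rpow_mul_rpow_le_of_ae_mul_le S.hc₀ hp' (fun _ => norm_nonneg _)
          S.cden_nonneg (S.c₀_mul_norm_FT_le_norm_FT_sub hp.le hp2 hδ hf)
    _ ≤ ENNReal.ofReal S.c₀⁻¹ * (∫⁻ x in Ioi (0 : ℝ),
          ENNReal.ofReal (‖S.FT (fun y => S.τ δ f y - f y) x‖ ^ p' * S.cden x)) ^ (1 / p') := by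
        gcongr
        positivity
    _ ≤ ENNReal.ofReal S.c₀⁻¹ * ENNReal.ofReal (C * S.omega p f δ) := by
        gcongr
        exact hHY _ (S.hτ_diff p hp.le δ f hf)
    _ = ENNReal.ofReal (S.c₀⁻¹ * C * S.omega p f δ) := by
        rw [← ENNReal.ofReal_mul (inv_nonneg.mpr S.hc₀.le), mul_assoc]
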